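/- Let (Λ_Q, f) be a C^{1+Lip} expansive and transitive Markov system. Then for every α > 0 one has H_HT(α) ⊆ H: every point with infinitely many hyperbolic times with exponent α has infinitely many hyperbolic instants. -/

import Mathlib

open Set Metric Filter MeasureTheory
open scoped Classical

/-- The word `[ω 0, ω 1, …, ω (n-1)]` read off from the sequence `ω`. -/
def wordOf {p : ℕ} (ω : ℕ → Fin p) (n : ℕ) : List (Fin p) :=
  (List.range n).map ω

/-- The cylinder sets `Δ_{i₁…iₙ} = g_{i₁…i_{n-1}}(I_{iₙ})` of the iterated function
system given by the big interval `I`, the subintervals `Isub i` and the maps `g i`;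
by convention `Δ_∅ = I`. -/
def cylOf {p : ℕ} (I : Set ℝ) (Isub : Fin p → Set ℝ) (g : Fin p → ℝ → ℝ) :
    List (Fin p) → Set ℝ
  | [] => I
  | [i] => Isub i
  | i :: j :: w => g i '' cylOf I Isub g (j :: w)

/-- The sequence `ω` contains the word `w` as a sub-word starting at position `n`. -/
def containsAt {p : ℕ} (ω : ℕ → Fin p) (w : List (Fin p)) (n : ℕ) : Prop :=
  ∀ k : ℕ, (hk : k < w.length) → ω (n + k) = w.get ⟨k, hk⟩

/-- The sequence `ω` belongs to `Σ_Q`, i.e. it contains no word of `Q` as a sub-word. -/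
def avoids {p : ℕ} (Q : Finset (List (Fin p))) (ω : ℕ → Fin p) : Prop :=
  ∀ w ∈ Q, ∀ n : ℕ, ¬ containsAt ω w n

/-- The limit set `Λ_Q = π(Σ_Q)`: points lying, for some `ω ∈ Σ_Q`, in all the
cylinders `Δ_{ω₀…ω_{n-1}}`. -/
def limitSetOf {p : ℕ} (I : Set ℝ) (Isub : Fin p → Set ℝ) (g : Fin p → ℝ → ℝ)
    (Q : Finset (List (Fin p))) : Set ℝ :=
  { x | ∃ ω : ℕ → Fin p, avoids Q ω ∧ ∀ n : ℕ, x ∈ cylOf I Isub g (wordOf ω n) }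

/-- `gIter g ω n = g_{i_n … i_1} = g_{ω (n-1)} ∘ ⋯ ∘ g_{ω 0}`. -/
def gIter {p : ℕ} (g : Fin p → ℝ → ℝ) (ω : ℕ → Fin p) : ℕ → ℝ → ℝ
  | 0 => id
  | n + 1 => g (ω n) ∘ gIter g ω n

/-- The derivative of the composition `gIter g ω n` at `x` (chain rule product). -/
noncomputable def gIterDer {p : ℕ} (g gder : Fin p → ℝ → ℝ) (ω : ℕ → Fin p)
    (n : ℕ) (x : ℝ) : ℝ :=
  ∏ k ∈ Finset.range n, gder (ω k) (gIter g ω k x)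

/-- Prepending the finite word `w` to the infinite sequence `ω`. -/
def prependWord {p : ℕ} (w : List (Fin p)) (ω : ℕ → Fin p) : ℕ → Fin p :=
  fun n => if h : n < w.length then w.get ⟨n, h⟩ else ω (n - w.length)

/-- `l(Σ_Q)`: the minimum, over all finite sets `Q'` of words with `Σ_{Q'} = Σ_Q`,
of the maximal length `l(Q')` of words of `Q'`. -/
noncomputable def minRepLen {p : ℕ} (Q : Finset (List (Fin p))) : ℕ :=
  sInf { n : ℕ | ∃ Q' : Finset (List (Fin p)),
    (∀ ω : ℕ → Fin p, avoids Q' ω ↔ avoids Q ω) ∧ Q'.sup List.length = n }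

/-- A `C^{1+Lip}` expansive and transitive Markov system `(Λ_Q, f)`. -/
structure ExpansiveMarkovSystem (p : ℕ) where
  /-- the alphabet is nonempty -/
  hp : 0 < p
  /-- the ambient closed interval `I` -/
  I : Set ℝ
  hI : ∃ a b : ℝ, a < b ∧ I = Set.Icc a b
  /-- the pairwise disjoint closed subintervals `I₁, …, I_p` -/
  Isub : Fin p → Set ℝ
  hIsub : ∀ i, ∃ a b : ℝ, a < b ∧ Isub i = Set.Icc a b
  hsubI : ∀ i, Isub i ⊆ I
  hdisj : ∀ i j, i ≠ j → Disjoint (Isub i) (Isub j)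
  /-- the contractions `g i`, defined on `⋃ j, Isub j` -/
  g : Fin p → ℝ → ℝ
  /-- the derivative of `g i` on `⋃ j, Isub j` -/
  gder : Fin p → ℝ → ℝ
  hg_inj : ∀ i, Set.InjOn (g i) (⋃ j, Isub j)
  hg_range : ∀ i, g i '' (⋃ j, Isub j) ⊆ interior (Isub i)
  hg_deriv : ∀ i, ∀ x ∈ ⋃ j, Isub j,
    HasDerivWithinAt (g i) (gder i x) (⋃ j, Isub j) x
  hgder_ne : ∀ i, ∀ x ∈ ⋃ j, Isub j, gder i x ≠ 0
  hgder_cont : ∀ i, ContinuousOn (gder i) (⋃ j, Isub j)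
  /-- `log |g i'|` is Lipschitz on the domain -/
  hgder_lip : ∀ i, ∃ θ : ℝ, ∀ x ∈ ⋃ j, Isub j, ∀ y ∈ ⋃ j, Isub j,
    abs (Real.log (abs (gder i x)) - Real.log (abs (gder i y))) ≤ θ * |x - y|
  /-- the expanding map `f`, with `f (g i x) = x` -/
  f : ℝ → ℝ
  /-- the derivative `f'` of `f` on the ranges of the `g i` -/
  fder : ℝ → ℝ
  hf : ∀ i, ∀ x ∈ ⋃ j, Isub j, f (g i x) = x
  hfder : ∀ i, ∀ x ∈ ⋃ j, Isub j, fder (g i x) = (gder i x)⁻¹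
  /-- the generator (expansivity) condition: `d_n → 0` -/
  hgen : ∀ ε : ℝ, 0 < ε → ∃ N : ℕ, ∀ w : List (Fin p), N ≤ w.length →
    Metric.diam (cylOf I Isub g w) < ε
  /-- the finite set of forbidden words -/
  Q : Finset (List (Fin p))
  /-- `Σ_Q` is completely invariant: `σ(Σ_Q) = Σ_Q` -/
  hQinv : ∀ ω : ℕ → Fin p, avoids Q ω →
    ∃ ω' : ℕ → Fin p, avoids Q ω' ∧ ∀ n : ℕ, ω' (n + 1) = ω n
  /-- `f|Λ_Q` is topologically transitive -/
  htrans : ∀ U V : Set ℝ, IsOpen U → IsOpen V →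
    (U ∩ limitSetOf I Isub g Q).Nonempty → (V ∩ limitSetOf I Isub g Q).Nonempty →
    ∃ n : ℕ, ∃ x ∈ U ∩ limitSetOf I Isub g Q, f^[n] x ∈ V

namespace ExpansiveMarkovSystem

variable {p : ℕ} (S : ExpansiveMarkovSystem p)

/-- The common domain `⋃ j, I_j` of the maps `g i`. -/
def dom : Set ℝ := ⋃ j, S.Isub j

/-- The cylinder `Δ_w` associated to the word `w`. -/
def cyl (w : List (Fin p)) : Set ℝ := cylOf S.I S.Isub S.g w

/-- The limit set `Λ_Q`. -/
def limitSet : Set ℝ := limitSetOf S.I S.Isub S.g S.Q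

/-- The domain of `f`, i.e. the union of the ranges of the `g i`. -/
def domF : Set ℝ := ⋃ i, S.g i '' S.dom

/-- The derivative `(fⁿ)'(x)` of the `n`-th iterate of `f` at `x`. -/
noncomputable def derIter (n : ℕ) (x : ℝ) : ℝ :=
  ∏ k ∈ Finset.range n, S.fder (S.f^[k] x)

/-- The Lyapunov exponent `χ(x) = limsup (1/n) log |(fⁿ)'(x)|`. -/
noncomputable def lyap (x : ℝ) : ℝ :=
  Filter.limsup (fun n : ℕ => Real.log |S.derIter n x| / n) Filter.atTop

/-- The set `H` of points of `Λ_Q` with infinitely many hyperbolic instants. -/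
def hypSet : Set ℝ :=
  { x ∈ S.limitSet | ∃ c₁ : ℝ, 0 < c₁ ∧ ∃ c₂ : ℝ, 0 < c₂ ∧
      ∃ n : ℕ → ℕ, StrictMono n ∧
        ∃ r : ℕ → ℝ, (∀ k, 0 < r k) ∧ Antitone r ∧
          Filter.Tendsto r Filter.atTop (nhds 0) ∧
          ∀ k : ℕ,
            (∀ y ∈ Metric.ball x (r k), ∀ j < n k, S.f^[j] y ∈ S.domF) ∧
            c₁ < Metric.diam (S.f^[n k] '' Metric.ball x (r k)) ∧
            (∀ y ∈ Metric.ball x (r k), ∀ z ∈ Metric.ball x (r k),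
              |S.derIter (n k) y| / |S.derIter (n k) z| < c₂) }

/-- `x` is a parabolic periodic point: `f^m(x) = x` and `|(f^m)'(x)| = 1`. -/
def IsParabolicPeriodic (x : ℝ) : Prop :=
  x ∈ S.limitSet ∧ ∃ m : ℕ, 1 ≤ m ∧ S.f^[m] x = x ∧ |S.derIter m x| = 1

/-- `ν` is a `t`-conformal (Borel probability) measure supported on `Λ_Q`. -/
def IsConformal (ν : Measure ℝ) (t : ℝ) : Prop :=
  IsProbabilityMeasure ν ∧ ν S.limitSetᶜ = 0 ∧
    ∀ A : Set ℝ, MeasurableSet A → A ⊆ S.limitSet → Set.InjOn S.f A →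
      ν (S.f '' A) = ∫⁻ x in A, ENNReal.ofReal (|S.fder x| ^ t) ∂ν

/-- `t_c = inf {t ≥ 0 : a t-conformal measure on Λ_Q exists}`. -/
noncomputable def tc : ℝ :=
  sInf { t : ℝ | 0 ≤ t ∧ ∃ ν : Measure ℝ, S.IsConformal ν t }

/-- `n` is a hyperbolic time for `x` with exponent `α`. -/
def IsHypTime (α : ℝ) (x : ℝ) (n : ℕ) : Prop :=
  ∀ k : ℕ, 1 ≤ k → k ≤ n → Real.exp (k * α) ≤ |S.derIter k (S.f^[n - k] x)|

/-- `H_HT(α)`: the points of `Λ_Q` with infinitely many hyperbolic times with exponent `α`. -/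
def HHT (α : ℝ) : Set ℝ :=
  { x ∈ S.limitSet | ∀ N : ℕ, ∃ n : ℕ, N ≤ n ∧ S.IsHypTime α x n }

end ExpansiveMarkovSystem

/-!
Fix a hyperbolic time `n` of `x` and let `G_k` be the inverse branch of `f^k` that maps
`f^n x` to `f^(n-k) x`; all of them are defined on a fixed ball `B` of radius `ρ` around
`f^n x`. By induction on `k ≤ n`, `G_k` contracts `B` by `e^(-kα/3)`: contraction at the
earlier levels makes the log-Lipschitz distortion of `(f^k)'` along the branch a geometric
series, bounded by `2α/3` for `ρ` small, and hyperbolicity of `n` then forces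
`|(f^k)'| ≥ e^(kα/3)` on `G_k B`. Thus `f^n` maps a ball around `x` of radius comparable to
`ρ / |(f^n)'(x)|` with bounded distortion onto a set of diameter comparable to `ρ`. Along
hyperbolic times `|(f^n)'(x)|` is nondecreasing and tends to infinity, so these radii
decrease to `0`.
-/

open Real Topology

lemma exists_abs_sub_eq_mul_abs_sub {F F' G : ℝ → ℝ} {J : Set ℝ} (hJ : J.OrdConnected)
    (hG : ContinuousOn G J) (hFG : LeftInvOn F G J)
    (hF : ∀ t ∈ J, HasDerivAt F (F' (G t)) (G t)) {t t' : ℝ} (ht : t ∈ J) (ht' : t' ∈ J) :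
    ∃ τ ∈ J, |t - t'| = |F' (G τ)| * |G t - G t'| := by
  wlog hlt : G t < G t' generalizing t t'
  · rcases (not_lt.1 hlt).lt_or_eq with h | h
    · obtain ⟨τ, hτ, e⟩ := this ht' ht h
      exact ⟨τ, hτ, by rw [abs_sub_comm, e, abs_sub_comm (G t')]⟩
    · refine ⟨t, ht, ?_⟩
      rw [← hFG ht, ← hFG ht', h]
      simp
  have hsub : G '' uIcc t t' ⊆ G '' J := image_mono (hJ.uIcc_subset ht ht')
  have hIcc : Icc (G t) (G t') ⊆ G '' J :=
    (uIcc_of_le hlt.le ▸ intermediate_value_uIcc (hG.mono (hJ.uIcc_subset ht ht'))).trans hsub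
  have hderiv : ∀ y ∈ Icc (G t) (G t'), HasDerivAt F (F' y) y := by
    intro y hy
    obtain ⟨τ, hτ, rfl⟩ := hIcc hy
    exact hF τ hτ
  obtain ⟨c, hc, hslope⟩ := exists_hasDerivAt_eq_slope F F' hlt
    (fun y hy => (hderiv y hy).continuousAt.continuousWithinAt)
    (fun y hy => hderiv y (Ioo_subset_Icc_self hy))
  obtain ⟨τ, hτ, rfl⟩ := hIcc (Ioo_subset_Icc_self hc)
  refine ⟨τ, hτ, ?_⟩
  rw [hslope, hFG ht, hFG ht', abs_div, abs_sub_comm (G t),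
    div_mul_cancel₀ _ (abs_ne_zero.2 (sub_ne_zero.2 hlt.ne')), abs_sub_comm]

lemma ball_subset_image_Icc_of_injOn {G : ℝ → ℝ} {a b s r : ℝ} (hs : s ∈ Icc a b)
    (hG : ContinuousOn G (Icc a b)) (hinj : InjOn G (Icc a b))
    (ha : r ≤ |G a - G s|) (hb : r ≤ |G b - G s|) : ball (G s) r ⊆ G '' Icc a b := by
  have hab : a ≤ b := hs.1.trans hs.2
  intro y hy
  rw [mem_ball, Real.dist_eq, abs_lt] at hy
  rcases hG.strictMonoOn_of_injOn_Icc' hab hinj with hm | hm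
  · have h1 := hm.monotoneOn (left_mem_Icc.2 hab) hs hs.1
    have h2 := hm.monotoneOn hs (right_mem_Icc.2 hab) hs.2
    rw [abs_of_nonpos (by linarith)] at ha
    rw [abs_of_nonneg (by linarith)] at hb
    exact intermediate_value_Icc hab hG ⟨by linarith, by linarith⟩
  · have h1 := hm.antitoneOn (left_mem_Icc.2 hab) hs hs.1
    have h2 := hm.antitoneOn hs (right_mem_Icc.2 hab) hs.2
    rw [abs_of_nonneg (by linarith)] at ha
    rw [abs_of_nonpos (by linarith)] at hb
    exact intermediate_value_Icc' hab hG ⟨by linarith, by linarith⟩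

lemma sum_range_exp_neg_mul_le {β : ℝ} (hβ : 0 < β) (k : ℕ) :
    ∑ j ∈ Finset.range k, exp (-(j * β)) ≤ (1 - exp (-β))⁻¹ := by
  have hq : exp (-β) < 1 := exp_lt_one_iff.2 (neg_lt_zero.2 hβ)
  have := geom_sum_Ico_le_of_lt_one (m := 0) (n := k) (exp_pos (-β)).le hq
  rw [← Finset.range_eq_Ico, pow_zero, one_div] at this
  refine le_of_eq_of_le (Finset.sum_congr rfl fun j _ => ?_) this
  rw [← exp_nat_mul]
  ring_nf

namespace ExpansiveMarkovSystem

variable {p : ℕ} (S : ExpansiveMarkovSystem p)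

lemma isCompact_dom : IsCompact S.dom :=
  isCompact_iUnion fun j => by
    obtain ⟨a, b, -, h⟩ := S.hIsub j
    exact h ▸ isCompact_Icc

lemma continuousOn_g (i : Fin p) : ContinuousOn (S.g i) S.dom :=
  fun u hu => (S.hg_deriv i u hu).continuousWithinAt

lemma g_mem_interior_dom (i : Fin p) {u : ℝ} (hu : u ∈ S.dom) : S.g i u ∈ interior S.dom :=
  interior_mono (subset_iUnion S.Isub i) (S.hg_range i ⟨u, hu, rfl⟩)

lemma f_g (i : Fin p) {u : ℝ} (hu : u ∈ S.dom) : S.f (S.g i u) = u :=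
  S.hf i u hu

lemma fder_g_ne_zero (i : Fin p) {u : ℝ} (hu : u ∈ S.dom) : S.fder (S.g i u) ≠ 0 := by
  rw [S.hfder i u hu]
  exact inv_ne_zero (S.hgder_ne i u hu)

/- At an interior point `g i` is strictly differentiable, hence a local homeomorphism, and `f`
is its local inverse. -/
lemma hasDerivAt_f_g (i : Fin p) {u : ℝ} (hu : u ∈ interior S.dom) :
    HasDerivAt S.f (S.fder (S.g i u)) (S.g i u) := by
  have hdom : S.dom ∈ 𝓝 u := mem_interior_iff_mem_nhds.1 hu
  have hne : S.gder i u ≠ 0 := S.hgder_ne i u (interior_subset hu)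
  have hg : HasStrictDerivAt (S.g i) (S.gder i u) u :=
    hasStrictDerivAt_of_hasDerivAt_of_continuousAt
      (Filter.mem_of_superset (isOpen_interior.mem_nhds hu) fun v hv =>
        (S.hg_deriv i v (interior_subset hv)).hasDerivAt (mem_interior_iff_mem_nhds.1 hv))
      ((S.hgder_cont i).continuousAt hdom)
  have hmap : Filter.map (S.g i) (𝓝 u) = 𝓝 (S.g i u) := hg.map_nhds_eq hne
  have hleft : ∀ᶠ v in 𝓝 u, S.f (S.g i v) = v :=
    Filter.mem_of_superset hdom fun v hv => S.f_g i hv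
  have hcont : ContinuousAt S.f (S.g i u) := by
    rw [ContinuousAt, ← hmap, tendsto_map'_iff, S.f_g i (interior_subset hu)]
    exact tendsto_id.congr' (hleft.mono fun v hv => hv.symm)
  have hright : ∀ᶠ y in 𝓝 (S.g i u), S.g i (S.f y) = y := by
    rw [← hmap, Filter.eventually_map]
    exact hleft.mono fun v hv => by rw [hv]
  rw [S.hfder i u (interior_subset hu)]
  exact HasDerivAt.of_local_left_inverse hcont
    ((S.f_g i (interior_subset hu)).symm ▸ hg.hasDerivAt) hne hright

noncomputable def logLip : ℝ := 1 + ∑ i, |(S.hgder_lip i).choose|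

lemma logLip_pos : 0 < S.logLip := by
  unfold logLip
  positivity

lemma abs_log_fder_g_sub_le (i : Fin p) {u v : ℝ} (hu : u ∈ S.dom) (hv : v ∈ S.dom) :
    |log (|S.fder (S.g i u)|) - log (|S.fder (S.g i v)|)| ≤ S.logLip * |u - v| := by
  have hθ : (S.hgder_lip i).choose ≤ S.logLip :=
    (le_abs_self _).trans <| (Finset.single_le_sum (f := fun j => |(S.hgder_lip j).choose|)
      (fun j _ => abs_nonneg _) (Finset.mem_univ i)).trans (le_add_of_nonneg_left zero_le_one)
  rw [S.hfder i u hu, S.hfder i v hv, abs_inv, abs_inv, log_inv, log_inv, neg_sub_neg,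
    abs_sub_comm]
  exact ((S.hgder_lip i).choose_spec u hu v hv).trans
    (mul_le_mul_of_nonneg_right hθ (abs_nonneg _))

lemma exists_closedBall_subset_interior_dom :
    ∃ δ > 0, ∀ s ∈ S.domF, closedBall s δ ⊆ interior S.dom := by
  have hK : IsCompact S.domF :=
    isCompact_iUnion fun i => S.isCompact_dom.image_of_continuousOn (S.continuousOn_g i)
  have hsub : S.domF ⊆ interior S.dom :=
    iUnion_subset fun i => by
      rintro _ ⟨u, hu, rfl⟩
      exact S.g_mem_interior_dom i hu
  obtain ⟨δ, hδ, hth⟩ := hK.exists_cthickening_subset_open isOpen_interior hsub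
  exact ⟨δ, hδ, fun s hs => (closedBall_subset_cthickening hs δ).trans hth⟩

lemma exists_radius_closedBall_subset_interior_dom {β : ℝ} (hβ : 0 < β) :
    ∃ ρ > 0, S.logLip * ρ ≤ β * (1 - exp (-β)) ∧
      ∀ s ∈ S.domF, closedBall s ρ ⊆ interior S.dom := by
  obtain ⟨δ, hδ, hδdom⟩ := S.exists_closedBall_subset_interior_dom
  have hq : 0 < 1 - exp (-β) := sub_pos.2 (exp_lt_one_iff.2 (neg_lt_zero.2 hβ))
  have := S.logLip_pos
  refine ⟨min δ (β * (1 - exp (-β)) / S.logLip), lt_min hδ (by positivity),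
    ?_, fun s hs => (closedBall_subset_closedBall (min_le_left _ _)).trans (hδdom s hs)⟩
  rw [← le_div_iff₀' S.logLip_pos]
  exact min_le_right _ _

lemma derIter_zero (y : ℝ) : S.derIter 0 y = 1 := by
  simp [derIter]

lemma derIter_succ (n : ℕ) (y : ℝ) :
    S.derIter (n + 1) y = S.fder y * S.derIter n (S.f y) := by
  simp only [derIter, Finset.prod_range_succ', Function.iterate_succ_apply,
    Function.iterate_zero_apply, mul_comm]

lemma derIter_add (m k : ℕ) (y : ℝ) :
    S.derIter (m + k) y = S.derIter m y * S.derIter k (S.f^[m] y) := by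
  simp only [derIter, Finset.prod_range_add]
  congr 1
  refine Finset.prod_congr rfl fun j _ => ?_
  rw [add_comm, Function.iterate_add_apply]

section InverseBranch

variable (η : ℕ → Fin p) {t : ℝ}

@[simp] lemma gIter_zero_apply : gIter S.g η 0 t = t := rfl

lemma gIter_succ_apply (k : ℕ) :
    gIter S.g η (k + 1) t = S.g (η k) (gIter S.g η k t) := rfl

lemma gIter_mem_dom (ht : t ∈ S.dom) : ∀ k, gIter S.g η k t ∈ S.dom
  | 0 => ht
  | k + 1 => interior_subset (S.g_mem_interior_dom _ (gIter_mem_dom ht k))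

lemma gIter_mem_interior_dom (ht : t ∈ interior S.dom) :
    ∀ k, gIter S.g η k t ∈ interior S.dom
  | 0 => ht
  | k + 1 => S.g_mem_interior_dom _ (S.gIter_mem_dom η (interior_subset ht) k)

lemma continuousOn_gIter : ∀ k, ContinuousOn (gIter S.g η k) S.dom
  | 0 => continuousOn_id
  | k + 1 => (S.continuousOn_g (η k)).comp (continuousOn_gIter k)
      fun _ ht => S.gIter_mem_dom η ht k

lemma iterate_f_gIter (ht : t ∈ S.dom) (m : ℕ) :
    ∀ j, S.f^[j] (gIter S.g η (m + j) t) = gIter S.g η m t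
  | 0 => rfl
  | j + 1 => by
    rw [Function.iterate_succ_apply, ← add_assoc, gIter_succ_apply,
      S.f_g _ (S.gIter_mem_dom η ht _)]
    exact iterate_f_gIter ht m j

lemma leftInvOn_iterate_f_gIter (k : ℕ) : LeftInvOn S.f^[k] (gIter S.g η k) S.dom :=
  fun t ht => by simpa using S.iterate_f_gIter η ht 0 k

lemma iterate_f_gIter_mem_domF (ht : t ∈ S.dom) {j k : ℕ} (hjk : j < k) :
    S.f^[j] (gIter S.g η k t) ∈ S.domF := by
  obtain ⟨m, rfl⟩ : ∃ m, k = m + 1 + j := ⟨k - j - 1, by omega⟩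
  rw [S.iterate_f_gIter η ht]
  exact mem_iUnion.2 ⟨η m, _, S.gIter_mem_dom η ht m, rfl⟩

lemma derIter_gIter_succ (ht : t ∈ S.dom) (k : ℕ) :
    S.derIter (k + 1) (gIter S.g η (k + 1) t) =
      S.fder (gIter S.g η (k + 1) t) * S.derIter k (gIter S.g η k t) := by
  rw [derIter_succ, gIter_succ_apply, S.f_g _ (S.gIter_mem_dom η ht k)]

lemma derIter_gIter_ne_zero (ht : t ∈ S.dom) : ∀ k, S.derIter k (gIter S.g η k t) ≠ 0
  | 0 => by simp [derIter_zero]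
  | k + 1 => by
    rw [S.derIter_gIter_succ η ht]
    exact mul_ne_zero (S.fder_g_ne_zero _ (S.gIter_mem_dom η ht k))
      (derIter_gIter_ne_zero ht k)

lemma hasDerivAt_iterate_gIter (ht : t ∈ interior S.dom) :
    ∀ k, HasDerivAt S.f^[k] (S.derIter k (gIter S.g η k t)) (gIter S.g η k t)
  | 0 => by simpa [derIter_zero] using hasDerivAt_id t
  | k + 1 => by
    rw [S.derIter_gIter_succ η (interior_subset ht), Function.iterate_succ, mul_comm]
    exact (hasDerivAt_iterate_gIter ht k).comp_of_eq _
      (S.hasDerivAt_f_g (η k) (S.gIter_mem_interior_dom η ht k))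
      (S.f_g _ (S.gIter_mem_dom η (interior_subset ht) k)).symm

lemma exists_abs_sub_eq_mul_abs_gIter_sub {s ρ : ℝ} (hB : closedBall s ρ ⊆ interior S.dom)
    (k : ℕ) {t t' : ℝ} (ht : t ∈ closedBall s ρ) (ht' : t' ∈ closedBall s ρ) :
    ∃ τ ∈ closedBall s ρ,
      |t - t'| = |S.derIter k (gIter S.g η k τ)| * |gIter S.g η k t - gIter S.g η k t'| :=
  have hBdom := hB.trans interior_subset
  exists_abs_sub_eq_mul_abs_sub (Real.closedBall_eq_Icc ▸ ordConnected_Icc)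
    ((S.continuousOn_gIter η k).mono hBdom) ((S.leftInvOn_iterate_f_gIter η k).mono hBdom)
    (fun _ hτ => S.hasDerivAt_iterate_gIter η (hB hτ) k) ht ht'

lemma abs_log_derIter_gIter_sub_le {t' : ℝ} (ht : t ∈ S.dom) (ht' : t' ∈ S.dom) :
    ∀ k, |log (|S.derIter k (gIter S.g η k t)|) - log (|S.derIter k (gIter S.g η k t')|)| ≤
      S.logLip * ∑ j ∈ Finset.range k, |gIter S.g η j t - gIter S.g η j t'|
  | 0 => by simp [derIter_zero]
  | k + 1 => by
    have hne := fun {t} (ht : t ∈ S.dom) =>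
      abs_ne_zero.2 (S.fder_g_ne_zero (η k) (S.gIter_mem_dom η ht k))
    have hne' := fun {t} (ht : t ∈ S.dom) => abs_ne_zero.2 (S.derIter_gIter_ne_zero η ht k)
    rw [S.derIter_gIter_succ η ht, S.derIter_gIter_succ η ht', gIter_succ_apply,
      gIter_succ_apply, abs_mul, abs_mul,
      log_mul (hne ht) (hne' ht), log_mul (hne ht') (hne' ht'), Finset.sum_range_succ, mul_add]
    obtain ⟨h1, h1'⟩ := abs_le.1 <|
      S.abs_log_fder_g_sub_le (η k) (S.gIter_mem_dom η ht k) (S.gIter_mem_dom η ht' k)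
    obtain ⟨h2, h2'⟩ := abs_le.1 (abs_log_derIter_gIter_sub_le ht ht' k)
    rw [abs_le]
    constructor <;> linarith

end InverseBranch

/-- The condition imposed on `(n k, r k)` in `hypSet`. -/
def IsHypInstant (c₁ c₂ x : ℝ) (n : ℕ) (r : ℝ) : Prop :=
  (∀ y ∈ ball x r, ∀ j < n, S.f^[j] y ∈ S.domF) ∧
    c₁ < diam (S.f^[n] '' ball x r) ∧
    ∀ y ∈ ball x r, ∀ z ∈ ball x r, |S.derIter n y| / |S.derIter n z| < c₂

section HyperbolicBranch

variable {η : ℕ → Fin p} {s ρ α β : ℝ} {n : ℕ}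

lemma abs_derIter_gIter_le_of_contracting (hβ : 0 < β)
    (hρ : S.logLip * ρ ≤ β * (1 - exp (-β))) (hB : closedBall s ρ ⊆ S.dom) {k : ℕ}
    (hcontr : ∀ j < k, ∀ t ∈ closedBall s ρ,
      |gIter S.g η j t - gIter S.g η j s| ≤ exp (-(j * β)) * |t - s|)
    {t t' : ℝ} (ht : t ∈ closedBall s ρ) (ht' : t' ∈ closedBall s ρ) :
    |S.derIter k (gIter S.g η k t)| ≤ exp (2 * β) * |S.derIter k (gIter S.g η k t')| := by
  have hq : 0 < 1 - exp (-β) := sub_pos.2 (exp_lt_one_iff.2 (neg_lt_zero.2 hβ))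
  have hsum : ∑ j ∈ Finset.range k, |gIter S.g η j t - gIter S.g η j t'| ≤
      2 * ρ * (1 - exp (-β))⁻¹ := by
    calc ∑ j ∈ Finset.range k, |gIter S.g η j t - gIter S.g η j t'|
        ≤ ∑ j ∈ Finset.range k, 2 * ρ * exp (-(j * β)) := by
          refine Finset.sum_le_sum fun j hj => ?_
          have h1 := hcontr j (Finset.mem_range.1 hj) t ht
          have h2 := hcontr j (Finset.mem_range.1 hj) t' ht'
          rw [mem_closedBall, Real.dist_eq] at ht ht'
          have := abs_sub_le (gIter S.g η j t) (gIter S.g η j s) (gIter S.g η j t')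
          rw [abs_sub_comm (gIter S.g η j s)] at this
          nlinarith [exp_pos (-(j * β))]
      _ = 2 * ρ * ∑ j ∈ Finset.range k, exp (-(j * β)) := (Finset.mul_sum ..).symm
      _ ≤ 2 * ρ * (1 - exp (-β))⁻¹ := by
          have hρ0 : 0 ≤ ρ := dist_nonneg.trans (mem_closedBall.1 ht)
          gcongr
          exact sum_range_exp_neg_mul_le hβ k
  have hlog : log (|S.derIter k (gIter S.g η k t)|) ≤
      log (|S.derIter k (gIter S.g η k t')|) + 2 * β := by
    have h := (abs_le.1 (S.abs_log_derIter_gIter_sub_le η (hB ht) (hB ht') k)).2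
    have h' : S.logLip * (2 * ρ * (1 - exp (-β))⁻¹) ≤ 2 * β := by
      rw [← mul_assoc, mul_left_comm, ← div_eq_mul_inv, div_le_iff₀ hq]
      nlinarith
    nlinarith [mul_le_mul_of_nonneg_left hsum S.logLip_pos.le]
  have hpos : ∀ {t}, t ∈ closedBall s ρ → 0 < |S.derIter k (gIter S.g η k t)| :=
    fun ht => abs_pos.2 (S.derIter_gIter_ne_zero η (hB ht) k)
  calc |S.derIter k (gIter S.g η k t)| = exp (log (|S.derIter k (gIter S.g η k t)|)) :=
        (exp_log (hpos ht)).symm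
    _ ≤ exp (log (|S.derIter k (gIter S.g η k t')|) + 2 * β) := exp_le_exp.2 hlog
    _ = exp (2 * β) * |S.derIter k (gIter S.g η k t')| := by
        rw [exp_add, exp_log (hpos ht'), mul_comm]

lemma abs_gIter_sub_le_of_isHypTime (hβ : 0 < β) (hαβ : 3 * β ≤ α)
    (hρ : S.logLip * ρ ≤ β * (1 - exp (-β))) (hB : closedBall s ρ ⊆ interior S.dom)
    (hn : S.IsHypTime α (gIter S.g η n s) n) :
    ∀ k ≤ n, ∀ t ∈ closedBall s ρ,
      |gIter S.g η k t - gIter S.g η k s| ≤ exp (-(k * β)) * |t - s| := by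
  intro k
  induction k using Nat.strong_induction_on with
  | _ k ih =>
  intro hkn t ht
  rcases Nat.eq_zero_or_pos k with rfl | hk
  · simp
  have hs : s ∈ closedBall s ρ := mem_closedBall_self (dist_nonneg.trans (mem_closedBall.1 ht))
  obtain ⟨τ, hτ, heq⟩ := S.exists_abs_sub_eq_mul_abs_gIter_sub η hB k ht hs
  have hD : exp (k * β) ≤ |S.derIter k (gIter S.g η k τ)| := by
    have h1 : exp (k * α) ≤ |S.derIter k (gIter S.g η k s)| := by
      have e := S.iterate_f_gIter η (hB.trans interior_subset hs) k (n - k)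
      rw [Nat.add_sub_cancel' hkn] at e
      exact e ▸ hn k hk hkn
    have h2 := S.abs_derIter_gIter_le_of_contracting hβ hρ (hB.trans interior_subset)
      (fun j hj => ih j hj (hj.le.trans hkn)) hs hτ
    have hk1 : (1 : ℝ) ≤ k := by exact_mod_cast hk
    have h3 : exp (k * β) * exp (2 * β) ≤ exp (k * α) := by
      rw [← exp_add]
      exact exp_le_exp.2 (by nlinarith)
    nlinarith [exp_pos (k * β), exp_pos (2 * β)]
  rw [heq, exp_neg, ← div_eq_inv_mul, le_div_iff₀ (exp_pos _)]
  nlinarith [abs_nonneg (gIter S.g η k t - gIter S.g η k s)]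

lemma abs_derIter_gIter_le_of_isHypTime (hβ : 0 < β) (hαβ : 3 * β ≤ α)
    (hρ : S.logLip * ρ ≤ β * (1 - exp (-β))) (hB : closedBall s ρ ⊆ interior S.dom)
    (hn : S.IsHypTime α (gIter S.g η n s) n)
    {t t' : ℝ} (ht : t ∈ closedBall s ρ) (ht' : t' ∈ closedBall s ρ) :
    |S.derIter n (gIter S.g η n t)| ≤ exp (2 * β) * |S.derIter n (gIter S.g η n t')| :=
  S.abs_derIter_gIter_le_of_contracting hβ hρ (hB.trans interior_subset)
    (fun j hj => S.abs_gIter_sub_le_of_isHypTime hβ hαβ hρ hB hn j hj.le) ht ht'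

lemma ball_subset_image_gIter_of_isHypTime (hβ : 0 < β) (hαβ : 3 * β ≤ α)
    (hρ : S.logLip * ρ ≤ β * (1 - exp (-β))) (hρ0 : 0 ≤ ρ)
    (hB : closedBall s ρ ⊆ interior S.dom)
    (hn : S.IsHypTime α (gIter S.g η n s) n) :
    ball (gIter S.g η n s) (ρ * exp (-(2 * β)) / |S.derIter n (gIter S.g η n s)|) ⊆
      gIter S.g η n '' closedBall s ρ := by
  have hBdom := hB.trans interior_subset
  have hs : s ∈ closedBall s ρ := mem_closedBall_self hρ0
  have hA : 0 < |S.derIter n (gIter S.g η n s)| :=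
    abs_pos.2 (S.derIter_gIter_ne_zero η (hBdom hs) n)
  have hend : ∀ t ∈ closedBall s ρ, |t - s| = ρ →
      ρ * exp (-(2 * β)) / |S.derIter n (gIter S.g η n s)| ≤
        |gIter S.g η n t - gIter S.g η n s| := by
    intro t ht hts
    obtain ⟨τ, hτ, heq⟩ := S.exists_abs_sub_eq_mul_abs_gIter_sub η hB n ht hs
    have hτs := S.abs_derIter_gIter_le_of_isHypTime hβ hαβ hρ hB hn hτ hs
    rw [div_le_iff₀ hA, exp_neg, ← div_eq_mul_inv, div_le_iff₀ (exp_pos _)]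
    nlinarith [abs_nonneg (gIter S.g η n t - gIter S.g η n s), exp_pos (2 * β)]
  have hIcc : closedBall s ρ = Icc (s - ρ) (s + ρ) := Real.closedBall_eq_Icc
  have hcont : ContinuousOn (gIter S.g η n) (Icc (s - ρ) (s + ρ)) :=
    hIcc ▸ (S.continuousOn_gIter η n).mono hBdom
  have hinj : InjOn (gIter S.g η n) (Icc (s - ρ) (s + ρ)) :=
    hIcc ▸ ((S.leftInvOn_iterate_f_gIter η n).mono hBdom).injOn
  rw [hIcc] at hs hend ⊢
  exact ball_subset_image_Icc_of_injOn hs hcont hinj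
    (hend _ ⟨le_rfl, by linarith⟩ (by rw [sub_sub_cancel_left, abs_neg, abs_of_nonneg hρ0]))
    (hend _ ⟨by linarith, le_rfl⟩ (by rw [add_sub_cancel_left, abs_of_nonneg hρ0]))

lemma lt_diam_image_iterate_ball_of_isHypTime (hβ : 0 < β) (hαβ : 3 * β ≤ α)
    (hρ : S.logLip * ρ ≤ β * (1 - exp (-β))) (hρ0 : 0 < ρ)
    (hB : closedBall s ρ ⊆ interior S.dom) (hn : S.IsHypTime α (gIter S.g η n s) n) :
    ρ * exp (-(4 * β)) / 4 < diam (S.f^[n] '' ball (gIter S.g η n s)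
      (ρ * exp (-(2 * β)) / |S.derIter n (gIter S.g η n s)|)) := by
  have hBdom := hB.trans interior_subset
  have hs : s ∈ closedBall s ρ := mem_closedBall_self hρ0.le
  have hball := S.ball_subset_image_gIter_of_isHypTime hβ hαβ hρ hρ0.le hB hn
  have hA : 0 < |S.derIter n (gIter S.g η n s)| :=
    abs_pos.2 (S.derIter_gIter_ne_zero η (hBdom hs) n)
  set G := gIter S.g η n with hG
  set r := ρ * exp (-(2 * β)) / |S.derIter n (G s)|
  have hr : 0 < r := by positivity
  have hy : G s + r / 2 ∈ ball (G s) r := by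
    rw [mem_ball, Real.dist_eq, add_sub_cancel_left, abs_of_pos (half_pos hr)]
    exact half_lt_self hr
  obtain ⟨t, ht, e⟩ := hball hy
  have hdiam : |t - s| ≤ diam (S.f^[n] '' ball (G s) r) := by
    have hmaps : MapsTo S.f^[n] (ball (G s) r) (closedBall s ρ) := fun y hy => by
      obtain ⟨t, ht, rfl⟩ := hball hy
      rwa [S.leftInvOn_iterate_f_gIter η n (hBdom ht)]
    have h := dist_le_diam_of_mem (isBounded_closedBall.subset hmaps.image_subset)
      (mem_image_of_mem S.f^[n] (e ▸ hy)) (mem_image_of_mem S.f^[n] (mem_ball_self hr))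
    rwa [hG, S.leftInvOn_iterate_f_gIter η n (hBdom ht),
      S.leftInvOn_iterate_f_gIter η n (hBdom hs), Real.dist_eq] at h
  obtain ⟨τ, hτ, heq⟩ := S.exists_abs_sub_eq_mul_abs_gIter_sub η hB n ht hs
  rw [← hG, e, add_sub_cancel_left, abs_of_pos (half_pos hr)] at heq
  have hτs : |S.derIter n (G s)| ≤ exp (2 * β) * |S.derIter n (G τ)| :=
    S.abs_derIter_gIter_le_of_isHypTime hβ hαβ hρ hB hn hs hτ
  have hlow : ρ * exp (-(4 * β)) ≤ |S.derIter n (G τ)| * r := by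
    have e : exp (-(4 * β)) * exp (2 * β) = exp (-(2 * β)) := by rw [← exp_add]; ring_nf
    rw [mul_div_assoc', le_div_iff₀ hA]
    calc ρ * exp (-(4 * β)) * |S.derIter n (G s)|
        ≤ ρ * exp (-(4 * β)) * (exp (2 * β) * |S.derIter n (G τ)|) := by gcongr
      _ = |S.derIter n (G τ)| * (ρ * exp (-(2 * β))) := by rw [← e]; ring
  have := mul_pos hρ0 (exp_pos (-(4 * β)))
  linarith

lemma isHypInstant_gIter_of_isHypTime (hβ : 0 < β) (hαβ : 3 * β ≤ α)
    (hρ : S.logLip * ρ ≤ β * (1 - exp (-β))) (hρ0 : 0 < ρ)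
    (hB : closedBall s ρ ⊆ interior S.dom) (hn : S.IsHypTime α (gIter S.g η n s) n) :
    S.IsHypInstant (ρ * exp (-(4 * β)) / 4) (exp (2 * β) + 1) (gIter S.g η n s) n
      (ρ * exp (-(2 * β)) / |S.derIter n (gIter S.g η n s)|) := by
  have hBdom := hB.trans interior_subset
  have hball := S.ball_subset_image_gIter_of_isHypTime hβ hαβ hρ hρ0.le hB hn
  refine ⟨fun y hy j hj => ?_, S.lt_diam_image_iterate_ball_of_isHypTime hβ hαβ hρ hρ0 hB hn,
    fun y hy z hz => ?_⟩
  · obtain ⟨t, ht, rfl⟩ := hball hy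
    exact S.iterate_f_gIter_mem_domF η (hBdom ht) hj
  · obtain ⟨t, ht, rfl⟩ := hball hy
    obtain ⟨t', ht', rfl⟩ := hball hz
    have hpos := abs_pos.2 (S.derIter_gIter_ne_zero η (hBdom ht') n)
    rw [div_lt_iff₀ hpos]
    nlinarith [S.abs_derIter_gIter_le_of_isHypTime hβ hαβ hρ hB hn ht ht']

end HyperbolicBranch

lemma wordOf_succ (ω : ℕ → Fin p) (k : ℕ) :
    wordOf ω (k + 1) = ω 0 :: wordOf (fun i => ω (i + 1)) k := by
  simp [wordOf, List.range_succ_eq_map]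

lemma cyl_cons_subset (i : Fin p) : ∀ w : List (Fin p), S.cyl (i :: w) ⊆ S.Isub i
  | [] => subset_rfl
  | j :: w => by
    rintro _ ⟨y, hy, rfl⟩
    exact interior_subset
      (S.hg_range i ⟨y, subset_iUnion S.Isub j (cyl_cons_subset j w hy), rfl⟩)

section Coding

variable {ω : ℕ → Fin p} {x : ℝ}

lemma eq_g_f_and_f_mem_cyl (hx : ∀ k, x ∈ S.cyl (wordOf ω k)) :
    x = S.g (ω 0) (S.f x) ∧ ∀ k, S.f x ∈ S.cyl (wordOf (fun i => ω (i + 1)) k) := by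
  have step : ∀ k, S.f x ∈ S.cyl (wordOf (fun i => ω (i + 1)) (k + 1)) ∧
      x = S.g (ω 0) (S.f x) := by
    intro k
    have h := hx (k + 2)
    rw [wordOf_succ, wordOf_succ] at h
    obtain ⟨y, hy, rfl⟩ := h
    have hy' : y ∈ S.cyl (wordOf (fun i => ω (i + 1)) (k + 1)) := by rwa [wordOf_succ]
    rw [S.f_g _ (subset_iUnion S.Isub _ (S.cyl_cons_subset _ _ hy))]
    exact ⟨hy', rfl⟩
  refine ⟨(step 0).2, fun k => ?_⟩
  cases k with
  | zero => exact S.hsubI _ (S.cyl_cons_subset _ _ (wordOf_succ _ 0 ▸ (step 0).1))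
  | succ k => exact (step k).1

lemma iterate_mem_cyl (hx : ∀ k, x ∈ S.cyl (wordOf ω k)) :
    ∀ m k, S.f^[m] x ∈ S.cyl (wordOf (fun i => ω (i + m)) k)
  | 0 => hx
  | m + 1 => by
    rw [Function.iterate_succ_apply']
    simpa only [add_assoc, add_comm 1 m] using (S.eq_g_f_and_f_mem_cyl (iterate_mem_cyl hx m)).2

lemma iterate_mem_dom (hx : ∀ k, x ∈ S.cyl (wordOf ω k)) (m : ℕ) : S.f^[m] x ∈ S.dom :=
  subset_iUnion S.Isub _ (S.cyl_cons_subset _ _ (S.iterate_mem_cyl hx m 1))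

lemma iterate_eq_g_iterate_succ (hx : ∀ k, x ∈ S.cyl (wordOf ω k)) (m : ℕ) :
    S.f^[m] x = S.g (ω m) (S.f^[m + 1] x) := by
  have := (S.eq_g_f_and_f_mem_cyl (S.iterate_mem_cyl hx m)).1
  rwa [zero_add, ← Function.iterate_succ_apply' S.f] at this

lemma gIter_reverse_iterate (hx : ∀ k, x ∈ S.cyl (wordOf ω k)) {n : ℕ} :
    ∀ k ≤ n, gIter S.g (fun j => ω (n - 1 - j)) k (S.f^[n] x) = S.f^[n - k] x
  | 0, _ => rfl
  | k + 1, hk => by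
    rw [gIter_succ_apply, gIter_reverse_iterate hx k (by omega),
      S.iterate_eq_g_iterate_succ hx (n - (k + 1)), show n - (k + 1) + 1 = n - k by omega,
      show n - 1 - k = n - (k + 1) by omega]

end Coding

section HypTime

variable {S}

lemma IsHypTime.exp_le {α x : ℝ} {n : ℕ} (hn : S.IsHypTime α x n) :
    exp (n * α) ≤ |S.derIter n x| := by
  rcases Nat.eq_zero_or_pos n with rfl | hn0
  · simp [derIter_zero]
  · simpa using hn n hn0 le_rfl

lemma IsHypTime.abs_derIter_le {α x : ℝ} {m n : ℕ} (hα : 0 ≤ α) (hn : S.IsHypTime α x n)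
    (hmn : m ≤ n) : |S.derIter m x| ≤ |S.derIter n x| := by
  obtain ⟨k, rfl⟩ := Nat.exists_eq_add_of_le hmn
  have hk : 1 ≤ |S.derIter k (S.f^[m] x)| := by
    rcases Nat.eq_zero_or_pos k with rfl | hk0
    · simp [derIter_zero]
    · have := hn k hk0 (by omega)
      rw [Nat.add_sub_cancel] at this
      exact (one_le_exp (by positivity)).trans this
  rw [derIter_add, abs_mul]
  exact le_mul_of_one_le_right (abs_nonneg _) hk

end HypTime

lemma isHypInstant_of_isHypTime {α β ρ x : ℝ} {n : ℕ} (hx : x ∈ S.limitSet) (hβ : 0 < β)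
    (hαβ : 3 * β ≤ α) (hρ : S.logLip * ρ ≤ β * (1 - exp (-β))) (hρ0 : 0 < ρ)
    (hρdom : ∀ s ∈ S.domF, closedBall s ρ ⊆ interior S.dom) (hn : S.IsHypTime α x n) :
    S.IsHypInstant (ρ * exp (-(4 * β)) / 4) (exp (2 * β) + 1) x n
      (ρ * exp (-(2 * β)) / |S.derIter n x|) := by
  obtain ⟨ω, -, hω⟩ := hx
  have hs : S.f^[n] x ∈ S.domF := by
    rw [S.iterate_eq_g_iterate_succ hω n]
    exact mem_iUnion.2 ⟨_, _, S.iterate_mem_dom hω (n + 1), rfl⟩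
  have hx : gIter S.g (fun j => ω (n - 1 - j)) n (S.f^[n] x) = x :=
    by simpa using S.gIter_reverse_iterate hω n le_rfl
  rw [← hx] at hn ⊢
  exact S.isHypInstant_gIter_of_isHypTime hβ hαβ hρ hρ0 (hρdom _ hs) hn

end ExpansiveMarkovSystem

/-- For every `α > 0`, `H_HT(α) ⊆ H`: every point with infinitely many
hyperbolic times with exponent `α` has infinitely many hyperbolic instants. -/
theorem HHT_subset_hypSet {p : ℕ} (S : ExpansiveMarkovSystem p) (α : ℝ) (hα : 0 < α) :
    S.HHT α ⊆ S.hypSet := by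
  rintro x ⟨hx, hhyp⟩
  obtain ⟨φ, hφ, hφhyp⟩ :=
    Filter.extraction_of_frequently_atTop (Filter.frequently_atTop.2 hhyp)
  have hβ : 0 < α / 3 := by positivity
  obtain ⟨ρ, hρ0, hρ, hρdom⟩ := S.exists_radius_closedBall_subset_interior_dom hβ
  have hA : ∀ k, 0 < |S.derIter (φ k) x| := fun k => (exp_pos _).trans_le (hφhyp k).exp_le
  refine ⟨hx, _, by positivity, _, by positivity, φ, hφ,
    fun k => ρ * exp (-(2 * (α / 3))) / |S.derIter (φ k) x|,
    fun k => div_pos (by positivity) (hA k),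
    fun k l hkl => ?_, ?_,
    fun k => S.isHypInstant_of_isHypTime hx hβ (by linarith) hρ hρ0 hρdom (hφhyp k)⟩
  · exact div_le_div_of_nonneg_left (by positivity) (hA k)
      ((hφhyp l).abs_derIter_le hα.le (hφ.monotone hkl))
  · refine tendsto_const_nhds.div_atTop (tendsto_atTop_mono (fun k => (hφhyp k).exp_le) ?_)
    exact tendsto_exp_atTop.comp
      ((tendsto_natCast_atTop_atTop.comp hφ.tendsto_atTop).atTop_mul_const hα)
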